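/- arXiv:2511.05382 — 4 statements merged into one kernel-verified Lean document; each statement's English description precedes it below -/
import Mathlib

section
/- Let χ : [0,1] → ℝ be continuous and suppose there exists c > 0 with χ(x) ≥ c for all x ∈ [0,1]. Then there exists a constant λ > 0 such that for every continuously differentiable function v : [0,1] → ℝ with v(1) = 0 one has λ · ∫₀¹ x·χ(x)·v(x)² dx ≤ ∫₀¹ x·χ(x)·(v'(x))² dx. -/
/-!
By the fundamental theorem of calculus and Cauchy–Schwarz, a `C¹` function `v` on `[0,1]` with
`v 1 = 0` satisfies `x v(x)² = x (∫ₓ¹ v')² ≤ (1 - x) ∫ₓ¹ x v'(t)² dt ≤ ∫₀¹ t v'(t)² dt`,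
because `x ≤ t` on `[x,1]`. Integrating over `[0,1]` gives the Poincaré inequality for the
weight `x` with constant `1`. Since `c ≤ χ ≤ max χ` on `[0,1]`, the weight `x χ(x)` is comparable
to `x`, and `λ = c / max χ` works.
-/

open Set MeasureTheory intervalIntegral

section

variable {a b x : ℝ} {g : ℝ → ℝ}

theorem sq_integral_le_mul_integral_sq (hab : a ≤ b) (hg : IntervalIntegrable g volume a b)
    (hg2 : IntervalIntegrable (fun t => g t ^ 2) volume a b) :
    (∫ t in a..b, g t) ^ 2 ≤ (b - a) * ∫ t in a..b, g t ^ 2 := by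
  have hquad : ∀ s : ℝ,
      0 ≤ (b - a) * (s * s) + (-2 * ∫ t in a..b, g t) * s + ∫ t in a..b, g t ^ 2 := by
    intro s
    have hexpand : ∫ t in a..b, (g t - s) ^ 2
        = (b - a) * (s * s) + (-2 * ∫ t in a..b, g t) * s + ∫ t in a..b, g t ^ 2 := by
      simp only [sub_sq]
      rw [integral_add (hg2.sub (hg.const_mul 2 |>.mul_const s)) intervalIntegrable_const,
        integral_sub hg2 (hg.const_mul 2 |>.mul_const s), intervalIntegral.integral_mul_const,
        intervalIntegral.integral_const_mul, intervalIntegral.integral_const, smul_eq_mul]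
      ring
    exact hexpand ▸ integral_nonneg hab fun t _ => sq_nonneg _
  have hdiscrim := discrim_le_zero hquad
  rw [discrim] at hdiscrim
  linarith

theorem mul_sq_integral_le_sub_mul_integral_mul_sq (hx : 0 ≤ x) (hxb : x ≤ b)
    (hg : ContinuousOn g (Icc x b)) :
    x * (∫ t in x..b, g t) ^ 2 ≤ (b - x) * ∫ t in x..b, t * g t ^ 2 := by
  have hg2 : ContinuousOn (fun t => g t ^ 2) (Icc x b) := hg.pow 2
  calc x * (∫ t in x..b, g t) ^ 2
      ≤ x * ((b - x) * ∫ t in x..b, g t ^ 2) := by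
        gcongr
        exact sq_integral_le_mul_integral_sq hxb (hg.intervalIntegrable_of_Icc hxb)
          (hg2.intervalIntegrable_of_Icc hxb)
    _ = (b - x) * ∫ t in x..b, x * g t ^ 2 := by rw [intervalIntegral.integral_const_mul]; ring
    _ ≤ (b - x) * ∫ t in x..b, t * g t ^ 2 :=
        mul_le_mul_of_nonneg_left (integral_mono_on hxb
          ((hg2.intervalIntegrable_of_Icc hxb).const_mul x)
          ((continuousOn_id.mul hg2).intervalIntegrable_of_Icc hxb)
          fun t ht => mul_le_mul_of_nonneg_right ht.1 (sq_nonneg _)) (sub_nonneg.2 hxb)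

theorem integral_mul_sq_le_of_le {w₁ w₂ : ℝ → ℝ} (hab : a ≤ b)
    (hw₁ : ContinuousOn w₁ (Icc a b)) (hw₂ : ContinuousOn w₂ (Icc a b))
    (hg : ContinuousOn g (Icc a b)) (hw : ∀ t ∈ Icc a b, w₁ t ≤ w₂ t) :
    ∫ t in a..b, w₁ t * g t ^ 2 ≤ ∫ t in a..b, w₂ t * g t ^ 2 :=
  integral_mono_on hab ((hw₁.mul (hg.pow 2)).intervalIntegrable_of_Icc hab)
    ((hw₂.mul (hg.pow 2)).intervalIntegrable_of_Icc hab)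
    fun t ht => mul_le_mul_of_nonneg_right (hw t ht) (sq_nonneg _)

end

section

variable {a b x : ℝ} {v : ℝ → ℝ}

theorem integral_derivWithin_Icc_eq_sub (hv : ContDiffOn ℝ 1 v (Icc a b)) (hx : x ∈ Icc a b) :
    ∫ t in x..b, derivWithin v (Icc a b) t = v b - v x := by
  rw [← integral_deriv_of_contDiffOn_Icc (hv.mono (Icc_subset_Icc_left hx.1)) hx.2]
  exact integral_congr_Ioo_of_le hx.2 fun t ht =>
    derivWithin_of_mem_nhds (Icc_mem_nhds (hx.1.trans_lt ht.1) ht.2)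

theorem integral_mul_sq_le_integral_mul_sq_derivWithin (hv : ContDiffOn ℝ 1 v (Icc 0 1))
    (hv1 : v 1 = 0) :
    ∫ x in (0 : ℝ)..1, x * v x ^ 2 ≤ ∫ x in (0 : ℝ)..1, x * derivWithin v (Icc 0 1) x ^ 2 := by
  set g := derivWithin v (Icc 0 1)
  have hg : ContinuousOn g (Icc 0 1) :=
    hv.continuousOn_derivWithin (uniqueDiffOn_Icc one_pos) le_rfl
  have hpointwise : ∀ x ∈ Icc (0 : ℝ) 1, x * v x ^ 2 ≤ ∫ t in (0 : ℝ)..1, t * g t ^ 2 := by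
    intro x hx
    have hvx : v x = -∫ t in x..1, g t := by
      rw [integral_derivWithin_Icc_eq_sub hv hx, hv1]; ring
    have htail : 0 ≤ ∫ t in x..1, t * g t ^ 2 :=
      integral_nonneg hx.2 fun t ht => mul_nonneg (hx.1.trans ht.1) (sq_nonneg _)
    calc x * v x ^ 2 = x * (∫ t in x..1, g t) ^ 2 := by rw [hvx, neg_sq]
      _ ≤ (1 - x) * ∫ t in x..1, t * g t ^ 2 :=
        mul_sq_integral_le_sub_mul_integral_mul_sq hx.1 hx.2
          (hg.mono (Icc_subset_Icc_left hx.1))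
      _ ≤ ∫ t in x..1, t * g t ^ 2 := mul_le_of_le_one_left htail (by linarith [hx.1])
      _ ≤ ∫ t in (0 : ℝ)..1, t * g t ^ 2 :=
        integral_mono_interval hx.1 hx.2 le_rfl
          (ae_restrict_of_forall_mem measurableSet_Ioc fun t ht =>
            mul_nonneg ht.1.le (sq_nonneg _))
          ((continuousOn_id.mul (hg.pow 2)).intervalIntegrable_of_Icc zero_le_one)
  calc ∫ x in (0 : ℝ)..1, x * v x ^ 2 ≤ ∫ _ in (0 : ℝ)..1, ∫ t in (0 : ℝ)..1, t * g t ^ 2 :=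
        integral_mono_on zero_le_one
          ((continuousOn_id.mul (hv.continuousOn.pow 2)).intervalIntegrable_of_Icc zero_le_one)
          intervalIntegrable_const hpointwise
    _ = ∫ t in (0 : ℝ)..1, t * g t ^ 2 := by simp

end

/-- Weighted Poincaré inequality on (0,1) with weight w(x) = x·χ(x), where the
continuous diffusivity χ is bounded below by a positive constant, for continuously
differentiable functions vanishing at the right endpoint. -/
theorem weighted_poincare
    (χ : ℝ → ℝ) (hχ : ContinuousOn χ (Set.Icc 0 1))
    (c : ℝ) (hc : 0 < c) (hχc : ∀ x ∈ Set.Icc (0:ℝ) 1, c ≤ χ x) :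
    ∃ lam : ℝ, 0 < lam ∧
      ∀ v : ℝ → ℝ, ContDiffOn ℝ 1 v (Set.Icc 0 1) → v 1 = 0 →
        lam * ∫ x in (0:ℝ)..1, x * χ x * (v x) ^ 2
          ≤ ∫ x in (0:ℝ)..1, x * χ x * (deriv v x) ^ 2 := by
  obtain ⟨x₀, hx₀, hmax⟩ := isCompact_Icc.exists_isMaxOn (nonempty_Icc.2 zero_le_one) hχ
  have hC : 0 < χ x₀ := hc.trans_le (hχc x₀ hx₀)
  refine ⟨c / χ x₀, by positivity, fun v hv hv1 => ?_⟩
  have hw : ContinuousOn (fun x => x * χ x) (Icc 0 1) := continuousOn_id.mul hχ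
  have hg : ContinuousOn (derivWithin v (Icc 0 1)) (Icc 0 1) :=
    hv.continuousOn_derivWithin (uniqueDiffOn_Icc one_pos) le_rfl
  have hderiv : ∫ x in (0:ℝ)..1, x * χ x * deriv v x ^ 2
      = ∫ x in (0:ℝ)..1, x * χ x * derivWithin v (Icc 0 1) x ^ 2 :=
    integral_congr_Ioo_of_le zero_le_one fun x hx => by
      rw [derivWithin_of_mem_nhds (Icc_mem_nhds hx.1 hx.2)]
  rw [hderiv]
  calc c / χ x₀ * ∫ x in (0:ℝ)..1, x * χ x * v x ^ 2
      ≤ c / χ x₀ * ∫ x in (0:ℝ)..1, χ x₀ * x * v x ^ 2 := by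
        gcongr
        exact integral_mul_sq_le_of_le zero_le_one hw (continuousOn_const.mul continuousOn_id)
          hv.continuousOn fun x hx => by
            rw [mul_comm]; exact mul_le_mul_of_nonneg_right (hmax hx) hx.1
    _ = c * ∫ x in (0:ℝ)..1, x * v x ^ 2 := by
        simp only [mul_assoc, intervalIntegral.integral_const_mul]; field_simp
    _ ≤ c * ∫ x in (0:ℝ)..1, x * derivWithin v (Icc 0 1) x ^ 2 := by
        gcongr; exact integral_mul_sq_le_integral_mul_sq_derivWithin hv hv1
    _ = ∫ x in (0:ℝ)..1, c * x * derivWithin v (Icc 0 1) x ^ 2 := by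
        simp only [mul_assoc, intervalIntegral.integral_const_mul]
    _ ≤ ∫ x in (0:ℝ)..1, x * χ x * derivWithin v (Icc 0 1) x ^ 2 :=
        integral_mul_sq_le_of_le zero_le_one (continuousOn_const.mul continuousOn_id) hw hg
          fun x hx => by rw [mul_comm]; exact mul_le_mul_of_nonneg_left (hχc x hx) hx.1
end

section
/- Let χ : [0,1] → ℝ be continuously differentiable with χ ≥ 0, let α > 0 and ε > 0, let g : [0,1] → ℝ be continuous, and let p, T : [0,1] → ℝ be twice continuously differentiable with p(1) = 0 and T(1) = 0, satisfying for all x ∈ [0,1] the identity α⁻¹·p(x)·x − (d/dx)(x·χ(x)·p'(x)) = (d/dx)(x·χ(x)·T'(x)) − g(x)·x. Then α⁻¹·∫₀¹ p(x)²·x dx + ∫₀¹ χ(x)·(p'(x))²·x dx ≤ √(∫₀¹ χ(x)·(T'(x))²·x dx) · √(∫₀¹ χ(x)·(p'(x))²·x dx) + √(∫₀¹ g(x)²·x dx) · √(∫₀¹ p(x)²·x dx). -/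
/-!
Testing the equation against `p` in `L²(x dx)` and integrating the flux terms by parts gives the
energy identity `α⁻¹ ∫ p² x + ∫ χ p'² x = -∫ χ T' p' x - ∫ g p x`; each term on the right is then
bounded by Cauchy–Schwarz, in `L²(χ x dx)` and in `L²(x dx)` respectively.
-/

open MeasureTheory intervalIntegral Set Filter

section CauchySchwarz

variable {α : Type*} [MeasurableSpace α] {μ : Measure α} {f h w : α → ℝ}

theorem abs_integral_mul_mul_le_sqrt_mul_sqrt (hw : ∀ᵐ x ∂μ, 0 ≤ w x)
    (hf : Integrable (fun x => f x ^ 2 * w x) μ) (hh : Integrable (fun x => h x ^ 2 * w x) μ)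
    (hfh : Integrable (fun x => f x * h x * w x) μ) :
    |∫ x, f x * h x * w x ∂μ| ≤ √(∫ x, f x ^ 2 * w x ∂μ) * √(∫ x, h x ^ 2 * w x ∂μ) := by
  set A := ∫ x, f x ^ 2 * w x ∂μ
  set B := ∫ x, f x * h x * w x ∂μ
  set C := ∫ x, h x ^ 2 * w x ∂μ
  have hquadratic : ∀ t : ℝ, 0 ≤ C * (t * t) + (-2 * B) * t + A := by
    intro t
    have hnonneg : 0 ≤ ∫ x, (f x - t * h x) ^ 2 * w x ∂μ :=
      integral_nonneg_of_ae (hw.mono fun x hx => mul_nonneg (sq_nonneg _) hx)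
    have hexpand : ∫ x, (f x - t * h x) ^ 2 * w x ∂μ = A - 2 * t * B + t ^ 2 * C := by
      calc ∫ x, (f x - t * h x) ^ 2 * w x ∂μ
          = ∫ x, f x ^ 2 * w x - 2 * t * (f x * h x * w x) + t ^ 2 * (h x ^ 2 * w x) ∂μ := by
            congr 1; ext x; ring
        _ = A - 2 * t * B + t ^ 2 * C := by
            rw [MeasureTheory.integral_add, MeasureTheory.integral_sub hf,
              MeasureTheory.integral_const_mul, MeasureTheory.integral_const_mul]
            exacts [hfh.const_mul _, hf.sub (hfh.const_mul _), hh.const_mul _]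
    nlinarith
  have hA : 0 ≤ A := integral_nonneg_of_ae (hw.mono fun x hx => mul_nonneg (sq_nonneg _) hx)
  have hB : B ^ 2 ≤ A * C := by
    have := discrim_le_zero hquadratic
    rw [discrim] at this
    nlinarith
  rw [← Real.sqrt_mul hA]
  exact Real.abs_le_sqrt hB

end CauchySchwarz

theorem abs_intervalIntegral_mul_mul_le_sqrt_mul_sqrt {a b : ℝ} (hab : a ≤ b) {f h w : ℝ → ℝ}
    (hf : ContinuousOn f (Icc a b)) (hh : ContinuousOn h (Icc a b))
    (hw : ContinuousOn w (Icc a b)) (hw0 : ∀ x ∈ Icc a b, 0 ≤ w x) :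
    |∫ x in a..b, f x * h x * w x|
      ≤ √(∫ x in a..b, f x ^ 2 * w x) * √(∫ x in a..b, h x ^ 2 * w x) := by
  have hint {F : ℝ → ℝ} (hF : ContinuousOn F (Icc a b)) :
      Integrable F (volume.restrict (Ioc a b)) :=
    hF.integrableOn_Icc.mono_set Ioc_subset_Icc_self
  simp only [integral_of_le hab]
  exact abs_integral_mul_mul_le_sqrt_mul_sqrt
    ((ae_restrict_iff' measurableSet_Ioc).2 <|
      ae_of_all _ fun x hx => hw0 x (Ioc_subset_Icc_self hx))
    (hint ((hf.pow 2).mul hw)) (hint ((hh.pow 2).mul hw)) (hint ((hf.mul hh).mul hw))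

section Green

variable {a b : ℝ} {f u k v : ℝ → ℝ}

theorem derivWithin_Icc_of_mem_Ioo {x : ℝ} (hx : x ∈ Ioo a b) :
    derivWithin f (Icc a b) x = deriv f x :=
  derivWithin_of_mem_nhds (Icc_mem_nhds hx.1 hx.2)

theorem ContDiffOn.hasDerivAt_of_mem_Ioo (hf : ContDiffOn ℝ 1 f (Icc a b)) {x : ℝ}
    (hx : x ∈ Ioo a b) : HasDerivAt f (deriv f x) x :=
  ((hf.contDiffAt (Icc_mem_nhds hx.1 hx.2)).differentiableAt one_ne_zero).hasDerivAt

theorem ContDiffOn.intervalIntegrable_deriv (hab : a < b) (hf : ContDiffOn ℝ 1 f (Icc a b)) :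
    IntervalIntegrable (deriv f) volume a b :=
  ((hf.continuousOn_derivWithin (uniqueDiffOn_Icc hab) le_rfl).intervalIntegrable_of_Icc
    hab.le).congr_uIoo (uIoo_of_le hab.le ▸ fun _ hx => derivWithin_Icc_of_mem_Ioo hx)

theorem eqOn_deriv_mul_deriv_derivWithin :
    EqOn (deriv fun y => k y * deriv v y) (deriv fun y => k y * derivWithin v (Icc a b) y)
      (Ioo a b) := fun x hx =>
  EventuallyEq.deriv_eq <| by
    filter_upwards [isOpen_Ioo.mem_nhds hx] with y hy
    rw [derivWithin_Icc_of_mem_Ioo hy]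

theorem ContDiffOn.mul_derivWithin (hab : a < b) (hk : ContDiffOn ℝ 1 k (Icc a b))
    (hv : ContDiffOn ℝ 2 v (Icc a b)) :
    ContDiffOn ℝ 1 (fun y => k y * derivWithin v (Icc a b) y) (Icc a b) :=
  hk.mul (hv.derivWithin (uniqueDiffOn_Icc hab) (by norm_num))

theorem intervalIntegrable_deriv_mul_deriv (hab : a < b) (hk : ContDiffOn ℝ 1 k (Icc a b))
    (hv : ContDiffOn ℝ 2 v (Icc a b)) :
    IntervalIntegrable (deriv fun y => k y * deriv v y) volume a b :=
  ((hk.mul_derivWithin hab hv).intervalIntegrable_deriv hab).congr_uIoo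
    (uIoo_of_le hab.le ▸ eqOn_deriv_mul_deriv_derivWithin.symm)

/-- `deriv v` may be junk at the endpoints, so the boundary terms and the energy integrand use the
one-sided derivative, which is continuous on `[a, b]`. -/
theorem integral_mul_deriv_mul_deriv (hab : a < b) (hu : ContDiffOn ℝ 1 u (Icc a b))
    (hk : ContDiffOn ℝ 1 k (Icc a b)) (hv : ContDiffOn ℝ 2 v (Icc a b)) :
    ∫ x in a..b, u x * deriv (fun y => k y * deriv v y) x
      = u b * (k b * derivWithin v (Icc a b) b) - u a * (k a * derivWithin v (Icc a b) a)
        - ∫ x in a..b, derivWithin u (Icc a b) x * derivWithin v (Icc a b) x * k x := by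
  have hK := hk.mul_derivWithin hab hv
  have hIoo : Ioo (min a b) (max a b) = Ioo a b := by rw [min_eq_left hab.le, max_eq_right hab.le]
  rw [integral_congr_Ioo_of_le hab.le fun x hx =>
      congrArg (u x * ·) (eqOn_deriv_mul_deriv_derivWithin hx),
    integral_mul_deriv_eq_deriv_mul_of_hasDerivAt
      (hu.continuousOn.mono (uIcc_of_le hab.le).subset)
      (hK.continuousOn.mono (uIcc_of_le hab.le).subset)
      (hIoo ▸ fun x hx => hu.hasDerivAt_of_mem_Ioo hx)
      (hIoo ▸ fun x hx => hK.hasDerivAt_of_mem_Ioo hx)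
      (hu.intervalIntegrable_deriv hab) (hK.intervalIntegrable_deriv hab)]
  congr 1
  refine integral_congr_Ioo_of_le hab.le fun x hx => ?_
  simp only [derivWithin_Icc_of_mem_Ioo hx]
  ring

end Green

section Radial

variable {χ u v : ℝ → ℝ}

theorem integral_mul_deriv_radial_flux (hχ : ContDiffOn ℝ 1 χ (Icc 0 1))
    (hu : ContDiffOn ℝ 1 u (Icc 0 1)) (hu1 : u 1 = 0) (hv : ContDiffOn ℝ 2 v (Icc 0 1)) :
    ∫ x in (0:ℝ)..1, u x * deriv (fun y => y * χ y * deriv v y) x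
      = -∫ x in (0:ℝ)..1, derivWithin u (Icc 0 1) x * derivWithin v (Icc 0 1) x * (x * χ x) := by
  -- The weight `x` kills the boundary term at `0`, and `u 1 = 0` the one at `1`.
  rw [integral_mul_deriv_mul_deriv one_pos hu (k := fun y => y * χ y) (contDiffOn_id.mul hχ) hv,
    hu1]
  ring

theorem intervalIntegrable_mul_deriv_radial_flux (hχ : ContDiffOn ℝ 1 χ (Icc 0 1))
    (hu : ContinuousOn u (Icc 0 1)) (hv : ContDiffOn ℝ 2 v (Icc 0 1)) :
    IntervalIntegrable (fun x => u x * deriv (fun y => y * χ y * deriv v y) x) volume 0 1 :=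
  (intervalIntegrable_deriv_mul_deriv one_pos (k := fun y => y * χ y) (contDiffOn_id.mul hχ)
    hv).continuousOn_mul (uIcc_of_le (zero_le_one' ℝ) ▸ hu)

end Radial

theorem adjoint_energy_identity {χ g p T : ℝ → ℝ} {α : ℝ} (hχ : ContDiffOn ℝ 1 χ (Icc 0 1))
    (hg : ContinuousOn g (Icc 0 1)) (hp : ContDiffOn ℝ 2 p (Icc 0 1))
    (hT : ContDiffOn ℝ 2 T (Icc 0 1)) (hp1 : p 1 = 0)
    (heq : ∀ x ∈ Icc (0:ℝ) 1,
      α⁻¹ * p x * x - deriv (fun y => y * χ y * deriv p y) x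
        = deriv (fun y => y * χ y * deriv T y) x - g x * x) :
    α⁻¹ * (∫ x in (0:ℝ)..1, p x ^ 2 * x)
        + ∫ x in (0:ℝ)..1, derivWithin p (Icc 0 1) x ^ 2 * (x * χ x)
      = -(∫ x in (0:ℝ)..1, derivWithin p (Icc 0 1) x * derivWithin T (Icc 0 1) x * (x * χ x))
        - ∫ x in (0:ℝ)..1, g x * p x * x := by
  have htested : ∫ x in (0:ℝ)..1, α⁻¹ * (p x ^ 2 * x)
      = ∫ x in (0:ℝ)..1, p x * deriv (fun y => y * χ y * deriv p y) x
          + p x * deriv (fun y => y * χ y * deriv T y) x - g x * p x * x :=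
    integral_congr fun x hx => by
      linear_combination p x * heq x (uIcc_of_le (zero_le_one' ℝ) ▸ hx)
  have hflux_p := intervalIntegrable_mul_deriv_radial_flux hχ hp.continuousOn hp
  have hflux_T := intervalIntegrable_mul_deriv_radial_flux hχ hp.continuousOn hT
  have hsource : IntervalIntegrable (fun x => g x * p x * x) volume 0 1 :=
    ((hg.mul hp.continuousOn).mul continuousOn_id).intervalIntegrable_of_Icc (zero_le_one' ℝ)
  have hp1' := hp.of_le one_le_two
  rw [intervalIntegral.integral_const_mul, integral_sub (hflux_p.add hflux_T) hsource,
    integral_add hflux_p hflux_T, integral_mul_deriv_radial_flux hχ hp1' hp1 hp,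
    integral_mul_deriv_radial_flux hχ hp1' hp1 hT] at htested
  have hsq : ∫ x in (0:ℝ)..1, derivWithin p (Icc 0 1) x * derivWithin p (Icc 0 1) x * (x * χ x)
      = ∫ x in (0:ℝ)..1, derivWithin p (Icc 0 1) x ^ 2 * (x * χ x) := by
    congr 1; ext x; ring
  linarith

theorem adjoint_cauchy_schwarz_estimate_general
    (χ : ℝ → ℝ) (hχ : ContDiffOn ℝ 1 χ (Set.Icc 0 1))
    (hχ0 : ∀ x ∈ Set.Icc (0:ℝ) 1, 0 ≤ χ x)
    (α : ℝ)
    (g : ℝ → ℝ) (hg : ContinuousOn g (Set.Icc 0 1))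
    (p T : ℝ → ℝ)
    (hp : ContDiffOn ℝ 2 p (Set.Icc 0 1))
    (hT : ContDiffOn ℝ 2 T (Set.Icc 0 1))
    (hp1 : p 1 = 0)
    (heq : ∀ x ∈ Set.Icc (0:ℝ) 1,
      α⁻¹ * p x * x - deriv (fun y => y * χ y * deriv p y) x
        = deriv (fun y => y * χ y * deriv T y) x - g x * x) :
    α⁻¹ * (∫ x in (0:ℝ)..1, (p x) ^ 2 * x)
      + (∫ x in (0:ℝ)..1, χ x * (deriv p x) ^ 2 * x)
    ≤ Real.sqrt (∫ x in (0:ℝ)..1, χ x * (deriv T x) ^ 2 * x)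
        * Real.sqrt (∫ x in (0:ℝ)..1, χ x * (deriv p x) ^ 2 * x)
      + Real.sqrt (∫ x in (0:ℝ)..1, (g x) ^ 2 * x)
        * Real.sqrt (∫ x in (0:ℝ)..1, (p x) ^ 2 * x) := by
  have hweighted {v : ℝ → ℝ} : ∫ x in (0:ℝ)..1, χ x * deriv v x ^ 2 * x
      = ∫ x in (0:ℝ)..1, derivWithin v (Icc 0 1) x ^ 2 * (x * χ x) :=
    integral_congr_Ioo_of_le (zero_le_one' ℝ) fun x hx => by
      simp only [derivWithin_Icc_of_mem_Ioo hx]; ring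
  have hderiv_cont {v : ℝ → ℝ} (hv : ContDiffOn ℝ 2 v (Icc 0 1)) :
      ContinuousOn (derivWithin v (Icc 0 1)) (Icc 0 1) :=
    hv.continuousOn_derivWithin (uniqueDiffOn_Icc one_pos) (by norm_num)
  have hflux_cs := abs_intervalIntegral_mul_mul_le_sqrt_mul_sqrt (zero_le_one' ℝ)
    (hderiv_cont hp) (hderiv_cont hT) (w := fun x => x * χ x)
    (continuousOn_id.mul hχ.continuousOn) fun x hx => mul_nonneg hx.1 (hχ0 x hx)
  have hsource_cs := abs_intervalIntegral_mul_mul_le_sqrt_mul_sqrt (zero_le_one' ℝ)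
    hg hp.continuousOn (w := fun x => x) continuousOn_id fun x hx => hx.1
  rw [hweighted, hweighted, adjoint_energy_identity hχ hg hp hT hp1 heq]
  linarith [neg_le_abs (∫ x in (0:ℝ)..1, g x * p x * x),
    neg_le_abs (∫ x in (0:ℝ)..1,
      derivWithin p (Icc 0 1) x * derivWithin T (Icc 0 1) x * (x * χ x))]

/-- Cauchy–Schwarz energy estimate obtained by testing the quasi-steady adjoint
equation (α⁻¹Id − (1/x)∂ₓ(xχ∂ₓ·))p = (1/x)∂ₓ(xχ∂ₓT) − g (multiplied by the weight x)
against the costate p with respect to the measure x dx. -/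
theorem adjoint_cauchy_schwarz_estimate
    (χ : ℝ → ℝ) (hχ : ContDiffOn ℝ 1 χ (Set.Icc 0 1))
    (hχ0 : ∀ x ∈ Set.Icc (0:ℝ) 1, 0 ≤ χ x)
    (α ε : ℝ) (hα : 0 < α) (hε : 0 < ε)
    (g : ℝ → ℝ) (hg : ContinuousOn g (Set.Icc 0 1))
    (p T : ℝ → ℝ)
    (hp : ContDiffOn ℝ 2 p (Set.Icc 0 1))
    (hT : ContDiffOn ℝ 2 T (Set.Icc 0 1))
    (hp1 : p 1 = 0) (hT1 : T 1 = 0)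
    (heq : ∀ x ∈ Set.Icc (0:ℝ) 1,
      α⁻¹ * p x * x - deriv (fun y => y * χ y * deriv p y) x
        = deriv (fun y => y * χ y * deriv T y) x - g x * x) :
    α⁻¹ * (∫ x in (0:ℝ)..1, (p x) ^ 2 * x)
      + (∫ x in (0:ℝ)..1, χ x * (deriv p x) ^ 2 * x)
    ≤ Real.sqrt (∫ x in (0:ℝ)..1, χ x * (deriv T x) ^ 2 * x)
        * Real.sqrt (∫ x in (0:ℝ)..1, χ x * (deriv p x) ^ 2 * x)
      + Real.sqrt (∫ x in (0:ℝ)..1, (g x) ^ 2 * x)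
        * Real.sqrt (∫ x in (0:ℝ)..1, (p x) ^ 2 * x) :=
  adjoint_cauchy_schwarz_estimate_general χ hχ hχ0 α g hg p T hp hT hp1 heq
end

section
/- Let χ : [0,1] → ℝ be continuously differentiable and suppose there exists c > 0 with χ(x) ≥ c for all x ∈ [0,1]. Let λ > 0 be such that λ·∫₀¹ x·χ(x)·v(x)² dx ≤ ∫₀¹ x·χ(x)·(v'(x))² dx for every continuously differentiable v : [0,1] → ℝ with v(1) = 0. Let α > 0, let g : [0,1] → ℝ be continuous, and let p, T : [0,1] → ℝ be twice continuously differentiable with p(1) = 0 and T(1) = 0, satisfying for all x ∈ [0,1] the identity α⁻¹·p(x)·x − (d/dx)(x·χ(x)·p'(x)) = (d/dx)(x·χ(x)·T'(x)) − g(x)·x. Then α⁻¹·∫₀¹ p(x)²·x dx + λ·∫₀¹ x·χ(x)·p(x)² dx ≤ ∫₀¹ χ(x)·(T'(x))²·x dx + α·∫₀¹ g(x)²·x dx. -/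
/-!
Multiplying the adjoint equation by `p` and integrating by parts gives the energy identity
`α⁻¹ ∫ p² x + ∫ xχ p'² = -∫ xχ T'p' - ∫ g p x`: the boundary term `x χ (p' + T') p` vanishes
at `0` because of the weight and at `1` because `p 1 = 0`. Completing the squares
`xχ (T' + p')² + α⁻¹ x (α g + p)² ≥ 0` (Young's inequality with `ε = 1/(2α)`) turns the identity
into `α⁻¹ ∫ p² x + ∫ xχ p'² ≤ ∫ xχ T'² + α ∫ g² x`, and the weighted Poincaré inequality
bounds `λ ∫ xχ p²` by `∫ xχ p'²`.
-/

open Set MeasureTheory intervalIntegral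

section

variable {a b : ℝ}

theorem deriv_eqOn_derivWithin_Icc_of_eqOn {f g : ℝ → ℝ} (h : EqOn f g (Ioo a b)) :
    EqOn (deriv f) (derivWithin g (Icc a b)) (Ioo a b) := fun x hx => by
  rw [(h.eventuallyEq_of_mem (Ioo_mem_nhds hx.1 hx.2)).deriv_eq,
    derivWithin_of_mem_nhds (Icc_mem_nhds hx.1 hx.2)]

theorem integral_derivWithin_mul_add_mul_derivWithin (hab : a < b) {u v : ℝ → ℝ}
    (hu : ContDiffOn ℝ 1 u (Icc a b)) (hv : ContDiffOn ℝ 1 v (Icc a b)) :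
    ∫ x in a..b, (derivWithin u (Icc a b) x * v x + u x * derivWithin v (Icc a b) x)
      = u b * v b - u a * v a := by
  have hs := uniqueDiffOn_Icc hab
  apply integral_deriv_mul_eq_sub_of_hasDerivWithinAt
  · rw [uIcc_of_le hab.le]
    exact fun x hx => (hu.differentiableOn one_ne_zero x hx).hasDerivWithinAt
  · rw [uIcc_of_le hab.le]
    exact fun x hx => (hv.differentiableOn one_ne_zero x hx).hasDerivWithinAt
  · exact (hu.continuousOn_derivWithin hs le_rfl).intervalIntegrable_of_Icc hab.le
  · exact (hv.continuousOn_derivWithin hs le_rfl).intervalIntegrable_of_Icc hab.le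

variable {α : ℝ} {w ρ g p T : ℝ → ℝ}

theorem integral_energy_eq_zero (hab : a < b) (hw : ContDiffOn ℝ 1 w (Icc a b)) (hwa : w a = 0)
    (hp : ContDiffOn ℝ 2 p (Icc a b)) (hT : ContDiffOn ℝ 2 T (Icc a b)) (hpb : p b = 0)
    (heq : ∀ x ∈ Ioo a b, α⁻¹ * p x * ρ x
        - derivWithin (fun y => w y * derivWithin p (Icc a b) y) (Icc a b) x
      = derivWithin (fun y => w y * derivWithin T (Icc a b) y) (Icc a b) x - g x * ρ x) :
    ∫ x in a..b, (α⁻¹ * p x ^ 2 * ρ x + w x * derivWithin p (Icc a b) x ^ 2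
      + w x * derivWithin T (Icc a b) x * derivWithin p (Icc a b) x + g x * p x * ρ x) = 0 := by
  set s := Icc a b
  have hs : UniqueDiffOn ℝ s := uniqueDiffOn_Icc hab
  have hwDp : ContDiffOn ℝ 1 (fun y => w y * derivWithin p s y) s :=
    hw.mul (hp.derivWithin hs (by norm_num))
  have hwDT : ContDiffOn ℝ 1 (fun y => w y * derivWithin T s y) s :=
    hw.mul (hT.derivWithin hs (by norm_num))
  set q := fun y => w y * derivWithin p s y + w y * derivWithin T s y
  have hDq : ∀ x ∈ Ioo a b, derivWithin q s x = α⁻¹ * p x * ρ x + g x * ρ x := fun x hx => by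
    have hx' := Ioo_subset_Icc_self hx
    rw [derivWithin_fun_add (hwDp.differentiableOn one_ne_zero x hx')
      (hwDT.differentiableOn one_ne_zero x hx')]
    linarith [heq x hx]
  calc _ = ∫ x in a..b, (derivWithin q s x * p x + q x * derivWithin p s x) :=
        integral_congr_Ioo_of_le hab.le fun x hx => by rw [hDq x hx]; ring
    _ = q b * p b - q a * p a :=
        integral_derivWithin_mul_add_mul_derivWithin hab (hwDp.add hwDT) (hp.of_le (by norm_num))
    _ = 0 := by simp [q, hwa, hpb]

theorem energy_estimate (hab : a < b) (hw : ContDiffOn ℝ 1 w (Icc a b))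
    (hw0 : ∀ x ∈ Icc a b, 0 ≤ w x) (hwa : w a = 0) (hρ : ContinuousOn ρ (Icc a b))
    (hρ0 : ∀ x ∈ Icc a b, 0 ≤ ρ x) (hα : 0 < α) (hg : ContinuousOn g (Icc a b))
    (hp : ContDiffOn ℝ 2 p (Icc a b)) (hT : ContDiffOn ℝ 2 T (Icc a b)) (hpb : p b = 0)
    (heq : ∀ x ∈ Ioo a b, α⁻¹ * p x * ρ x
        - derivWithin (fun y => w y * derivWithin p (Icc a b) y) (Icc a b) x
      = derivWithin (fun y => w y * derivWithin T (Icc a b) y) (Icc a b) x - g x * ρ x) :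
    α⁻¹ * (∫ x in a..b, p x ^ 2 * ρ x) + ∫ x in a..b, w x * derivWithin p (Icc a b) x ^ 2
      ≤ (∫ x in a..b, w x * derivWithin T (Icc a b) x ^ 2) + α * ∫ x in a..b, g x ^ 2 * ρ x := by
  have identity := integral_energy_eq_zero hab hw hwa hp hT hpb heq
  set s := Icc a b
  have hs : UniqueDiffOn ℝ s := uniqueDiffOn_Icc hab
  have hDp : ContinuousOn (derivWithin p s) s := hp.continuousOn_derivWithin hs (by norm_num)
  have hDT : ContinuousOn (derivWithin T s) s := hT.continuousOn_derivWithin hs (by norm_num)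
  have hpc := hp.continuousOn
  have hwc := hw.continuousOn
  have hint : ∀ {f : ℝ → ℝ}, ContinuousOn f s → IntervalIntegrable f volume a b :=
    fun hf => hf.intervalIntegrable_of_Icc hab.le
  have squares : 0 ≤ ∫ x in a..b, (w x * (derivWithin T s x + derivWithin p s x) ^ 2
      + α⁻¹ * ρ x * (α * g x + p x) ^ 2) :=
    integral_nonneg hab.le fun x hx => by
      have := hw0 x hx
      have := hρ0 x hx
      positivity
  have expand : ∫ x in a..b, (w x * derivWithin T s x ^ 2 + α * (g x ^ 2 * ρ x)
        - α⁻¹ * (p x ^ 2 * ρ x) - w x * derivWithin p s x ^ 2)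
      = ∫ x in a..b, ((w x * (derivWithin T s x + derivWithin p s x) ^ 2
        + α⁻¹ * ρ x * (α * g x + p x) ^ 2)
        - 2 * (α⁻¹ * p x ^ 2 * ρ x + w x * derivWithin p s x ^ 2
          + w x * derivWithin T s x * derivWithin p s x + g x * p x * ρ x)) :=
    integral_congr fun x _ => by field_simp; ring
  rw [integral_sub (hint (by fun_prop)) (hint (by fun_prop)),
    integral_sub (hint (by fun_prop)) (hint (by fun_prop)),
    integral_add (hint (by fun_prop)) (hint (by fun_prop)),
    integral_sub (hint (by fun_prop)) (hint (by fun_prop)),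
    intervalIntegral.integral_const_mul, intervalIntegral.integral_const_mul,
    intervalIntegral.integral_const_mul, identity, mul_zero, sub_zero] at expand
  rw [← expand] at squares
  linarith

end

theorem costate_final_estimate_general
    (χ : ℝ → ℝ) (hχ : ContDiffOn ℝ 1 χ (Set.Icc 0 1))
    (c : ℝ) (hc : 0 < c) (hχc : ∀ x ∈ Set.Icc (0:ℝ) 1, c ≤ χ x)
    (lam : ℝ)
    (hpoincare : ∀ v : ℝ → ℝ, ContDiffOn ℝ 1 v (Set.Icc 0 1) → v 1 = 0 →
      lam * ∫ x in (0:ℝ)..1, x * χ x * (v x) ^ 2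
        ≤ ∫ x in (0:ℝ)..1, x * χ x * (deriv v x) ^ 2)
    (α : ℝ) (hα : 0 < α)
    (g : ℝ → ℝ) (hg : ContinuousOn g (Set.Icc 0 1))
    (p T : ℝ → ℝ)
    (hp : ContDiffOn ℝ 2 p (Set.Icc 0 1))
    (hT : ContDiffOn ℝ 2 T (Set.Icc 0 1))
    (hp1 : p 1 = 0)
    (heq : ∀ x ∈ Set.Icc (0:ℝ) 1,
      α⁻¹ * p x * x - deriv (fun y => y * χ y * deriv p y) x
        = deriv (fun y => y * χ y * deriv T y) x - g x * x) :
    α⁻¹ * (∫ x in (0:ℝ)..1, (p x) ^ 2 * x)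
      + lam * (∫ x in (0:ℝ)..1, x * χ x * (p x) ^ 2)
    ≤ (∫ x in (0:ℝ)..1, χ x * (deriv T x) ^ 2 * x)
      + α * (∫ x in (0:ℝ)..1, (g x) ^ 2 * x) := by
  -- `deriv` is uncontrolled at the endpoints, so the argument runs with `derivWithin` on `Icc 0 1`
  have hderiv (u : ℝ → ℝ) : EqOn (deriv u) (derivWithin u (Icc 0 1)) (Ioo 0 1) :=
    deriv_eqOn_derivWithin_Icc_of_eqOn (eqOn_refl u _)
  have hflux (u : ℝ → ℝ) : EqOn (deriv fun y => y * χ y * deriv u y)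
      (derivWithin (fun y => y * χ y * derivWithin u (Icc 0 1) y) (Icc 0 1)) (Ioo 0 1) :=
    deriv_eqOn_derivWithin_Icc_of_eqOn fun y hy => by rw [hderiv u hy]
  have energy := energy_estimate (w := fun x => x * χ x) (ρ := fun x => x)
    zero_lt_one (contDiffOn_id.mul hχ) (fun x hx => mul_nonneg hx.1 (hc.le.trans (hχc x hx)))
    (zero_mul _) continuousOn_id (fun x hx => hx.1) hα hg hp hT hp1 fun x hx => by
      rw [← hflux p hx, ← hflux T hx]
      exact heq x (Ioo_subset_Icc_self hx)
  have poincare := hpoincare p (hp.of_le (by norm_num)) hp1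
  have hp' : ∫ x in (0:ℝ)..1, x * χ x * deriv p x ^ 2
      = ∫ x in (0:ℝ)..1, x * χ x * derivWithin p (Icc 0 1) x ^ 2 :=
    integral_congr_Ioo_of_le zero_le_one fun x hx => by rw [hderiv p hx]
  have hT' : ∫ x in (0:ℝ)..1, χ x * deriv T x ^ 2 * x
      = ∫ x in (0:ℝ)..1, x * χ x * derivWithin T (Icc 0 1) x ^ 2 :=
    integral_congr_Ioo_of_le zero_le_one fun x hx => by rw [hderiv T hx]; ring
  linarith

/-- Final a priori estimate on the costate: combining the energy estimate with
ε = 1/(2α) and the weighted Poincaré inequality with constant λ for the weight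
x·χ(x) yields α⁻¹‖p‖²_{L²ₓ} + λ‖p‖²_{L²_{xχ}} ≤ ‖T‖²_{Ḣ¹_{xχ}} + α‖g‖²_{L²ₓ}. -/
theorem costate_final_estimate
    (χ : ℝ → ℝ) (hχ : ContDiffOn ℝ 1 χ (Set.Icc 0 1))
    (c : ℝ) (hc : 0 < c) (hχc : ∀ x ∈ Set.Icc (0:ℝ) 1, c ≤ χ x)
    (lam : ℝ) (hlam : 0 < lam)
    (hpoincare : ∀ v : ℝ → ℝ, ContDiffOn ℝ 1 v (Set.Icc 0 1) → v 1 = 0 →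
      lam * ∫ x in (0:ℝ)..1, x * χ x * (v x) ^ 2
        ≤ ∫ x in (0:ℝ)..1, x * χ x * (deriv v x) ^ 2)
    (α : ℝ) (hα : 0 < α)
    (g : ℝ → ℝ) (hg : ContinuousOn g (Set.Icc 0 1))
    (p T : ℝ → ℝ)
    (hp : ContDiffOn ℝ 2 p (Set.Icc 0 1))
    (hT : ContDiffOn ℝ 2 T (Set.Icc 0 1))
    (hp1 : p 1 = 0) (hT1 : T 1 = 0)
    (heq : ∀ x ∈ Set.Icc (0:ℝ) 1,
      α⁻¹ * p x * x - deriv (fun y => y * χ y * deriv p y) x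
        = deriv (fun y => y * χ y * deriv T y) x - g x * x) :
    α⁻¹ * (∫ x in (0:ℝ)..1, (p x) ^ 2 * x)
      + lam * (∫ x in (0:ℝ)..1, x * χ x * (p x) ^ 2)
    ≤ (∫ x in (0:ℝ)..1, χ x * (deriv T x) ^ 2 * x)
      + α * (∫ x in (0:ℝ)..1, (g x) ^ 2 * x) :=
  costate_final_estimate_general χ hχ c hc hχc lam hpoincare α hα g hg p T hp hT hp1 heq
end

section
/- Let μ > 0, t_f > 0, let T₀, T̄ : [0,1] → ℝ be continuous, define T̂(x,t) = T₀(x) + (1 − exp(−μ·t/t_f))·(T̄(x) − T₀(x)), and let T : [0,1] × [0,t_f] → ℝ be continuous. Define J(t) = (1/2)·∫₀¹ (T(x,t) − T̂(x,t_f))²·x dx, J₁(t) = (1/2)·∫₀¹ (T(x,t) − T̂(x,t))²·x dx, and J₂(t) = (1/2)·∫₀¹ (T̂(x,t) − T̂(x,t_f))²·x dx. Then for every t ∈ [0,t_f], J(t) ≤ 2·J₁(t) + 2·exp(−2μ·t/t_f)·J₂(0). -/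
private lemma cont_to_intInt {f : ℝ → ℝ} (h : ContinuousOn f (Set.Icc 0 1)) :
    IntervalIntegrable f MeasureTheory.volume 0 1 := by
  apply ContinuousOn.intervalIntegrable
  rwa [Set.uIcc_of_le (by norm_num : (0:ℝ) ≤ 1)]

/-- Combined estimate: the objective functional decays exponentially up to the
controlled tracking error, J(t) ≤ 2·J₁(t) + 2·e^{−2μt/t_f}·J₂(0). -/
theorem objective_decay_up_to_tracking_error
    (μ tf : ℝ) (hμ : 0 < μ) (htf : 0 < tf)
    (T₀ Tbar : ℝ → ℝ)
    (hT₀ : ContinuousOn T₀ (Set.Icc 0 1)) (hTbar : ContinuousOn Tbar (Set.Icc 0 1))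
    (That : ℝ → ℝ → ℝ)
    (hThat : ∀ x t : ℝ,
      That x t = T₀ x + (1 - Real.exp (-μ * t / tf)) * (Tbar x - T₀ x))
    (T : ℝ → ℝ → ℝ)
    (hT : ContinuousOn (fun q : ℝ × ℝ => T q.1 q.2) (Set.Icc (0:ℝ) 1 ×ˢ Set.Icc 0 tf))
    (J J₁ J₂ : ℝ → ℝ)
    (hJ : ∀ t : ℝ,
      J t = (1 / 2) * ∫ x in (0:ℝ)..1, (T x t - That x tf) ^ 2 * x)
    (hJ₁ : ∀ t : ℝ,
      J₁ t = (1 / 2) * ∫ x in (0:ℝ)..1, (T x t - That x t) ^ 2 * x)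
    (hJ₂ : ∀ t : ℝ,
      J₂ t = (1 / 2) * ∫ x in (0:ℝ)..1, (That x t - That x tf) ^ 2 * x) :
    ∀ t ∈ Set.Icc 0 tf,
      J t ≤ 2 * J₁ t + 2 * Real.exp (-2 * μ * t / tf) * J₂ 0 := by
  intro t ht
  obtain ⟨ht0, httf⟩ := ht
  set a := Real.exp (-μ * t / tf) with ha
  set b := Real.exp (-μ * tf / tf) with hb
  -- continuity facts
  have hTt : ContinuousOn (fun x => T x t) (Set.Icc 0 1) := by
    have hc : ContinuousOn (fun x : ℝ => ((x, t) : ℝ × ℝ)) (Set.Icc 0 1) :=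
      (continuous_id.prodMk continuous_const).continuousOn
    exact hT.comp hc (fun x hx => ⟨hx, ht0, httf⟩)
  have hThatCont : ∀ s : ℝ, ContinuousOn (fun x => That x s) (Set.Icc 0 1) := by
    intro s
    have hc : ContinuousOn
        (fun x => T₀ x + (1 - Real.exp (-μ * s / tf)) * (Tbar x - T₀ x))
        (Set.Icc 0 1) := hT₀.add (continuousOn_const.mul (hTbar.sub hT₀))
    exact hc.congr (fun x _ => hThat x s)
  -- integrability
  have int1 : IntervalIntegrable (fun x => (T x t - That x t) ^ 2 * x)
      MeasureTheory.volume 0 1 :=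
    cont_to_intInt (((hTt.sub (hThatCont t)).pow 2).mul continuousOn_id)
  have int2 : IntervalIntegrable (fun x => (That x t - That x tf) ^ 2 * x)
      MeasureTheory.volume 0 1 :=
    cont_to_intInt ((((hThatCont t).sub (hThatCont tf)).pow 2).mul continuousOn_id)
  have int0 : IntervalIntegrable (fun x => (T x t - That x tf) ^ 2 * x)
      MeasureTheory.volume 0 1 :=
    cont_to_intInt (((hTt.sub (hThatCont tf)).pow 2).mul continuousOn_id)
  -- Step 1: J t ≤ 2 J₁ t + 2 J₂ t
  have key : (∫ x in (0:ℝ)..1, (T x t - That x tf) ^ 2 * x)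
      ≤ (∫ x in (0:ℝ)..1, (2 * ((T x t - That x t) ^ 2 * x)
          + 2 * ((That x t - That x tf) ^ 2 * x))) := by
    apply intervalIntegral.integral_mono_on (by norm_num) int0
      ((int1.const_mul 2).add (int2.const_mul 2))
    intro x hx
    have hx0 : 0 ≤ x := hx.1
    nlinarith [sq_nonneg (T x t - 2 * That x t + That x tf),
      mul_nonneg (sq_nonneg (T x t - 2 * That x t + That x tf)) hx0]
  have split : (∫ x in (0:ℝ)..1, (2 * ((T x t - That x t) ^ 2 * x)
        + 2 * ((That x t - That x tf) ^ 2 * x)))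
      = 2 * (∫ x in (0:ℝ)..1, (T x t - That x t) ^ 2 * x)
        + 2 * (∫ x in (0:ℝ)..1, (That x t - That x tf) ^ 2 * x) := by
    rw [intervalIntegral.integral_add (int1.const_mul 2) (int2.const_mul 2),
      intervalIntegral.integral_const_mul, intervalIntegral.integral_const_mul]
  have step1 : J t ≤ 2 * J₁ t + 2 * J₂ t := by
    rw [hJ, hJ₁, hJ₂]; rw [split] at key; linarith
  -- Step 2: J₂ t ≤ a^2 * J₂ 0
  set I := ∫ x in (0:ℝ)..1, (Tbar x - T₀ x) ^ 2 * x with hI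
  have hInonneg : 0 ≤ I := by
    apply intervalIntegral.integral_nonneg (by norm_num)
    intro x hx
    exact mul_nonneg (sq_nonneg _) hx.1
  have intI : IntervalIntegrable (fun x => (Tbar x - T₀ x) ^ 2 * x)
      MeasureTheory.volume 0 1 :=
    cont_to_intInt (((hTbar.sub hT₀).pow 2).mul continuousOn_id)
  have hJ₂t : ∀ s : ℝ, J₂ s
      = (1 / 2) * ((b - Real.exp (-μ * s / tf)) ^ 2 * I) := by
    intro s
    rw [hJ₂]
    congr 1
    have : ∀ x : ℝ, (That x s - That x tf) ^ 2 * x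
        = (b - Real.exp (-μ * s / tf)) ^ 2 * ((Tbar x - T₀ x) ^ 2 * x) := by
      intro x; rw [hThat x s, hThat x tf]; ring
    rw [intervalIntegral.integral_congr (fun x _ => this x),
      intervalIntegral.integral_const_mul]
  have hb0 : 0 < b := Real.exp_pos _
  have hab : b ≤ a := by
    apply Real.exp_le_exp.2
    have := mul_le_mul_of_nonneg_left httf hμ.le
    rw [div_le_div_iff₀ htf htf]
    nlinarith
  have ha1 : a ≤ 1 := by
    rw [ha, show (1:ℝ) = Real.exp 0 by simp]
    apply Real.exp_le_exp.2
    apply div_nonpos_of_nonpos_of_nonneg _ htf.le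
    nlinarith
  have hexp2 : Real.exp (-2 * μ * t / tf) = a ^ 2 := by
    rw [ha, ← Real.exp_nat_mul]
    norm_num; ring_nf
  have hsq : (b - a) ^ 2 ≤ a ^ 2 * (b - 1) ^ 2 := by
    have h1 : a - b ≤ a * (1 - b) := by nlinarith
    have h2 : 0 ≤ a - b := sub_nonneg.2 hab
    have := pow_le_pow_left₀ h2 h1 2
    nlinarith
  have step2 : J₂ t ≤ a ^ 2 * J₂ 0 := by
    rw [hJ₂t t, hJ₂t 0]
    simp only [mul_zero, neg_zero, zero_div, Real.exp_zero]
    have : (b - a) ^ 2 * I ≤ a ^ 2 * (b - 1) ^ 2 * I :=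
      mul_le_mul_of_nonneg_right hsq hInonneg
    nlinarith
  rw [hexp2]
  nlinarith [step1, step2]
end
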